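/- arXiv:2108.04871 — 2 statements merged into one kernel-verified Lean document; each statement's English description precedes it below -/
import Mathlib

section
/- Let q be a prime power and t, m integers with 1 ≤ t ≤ q − 1 and m ≥ t. There exists a strong (t mod q)-arc of cardinality m·q + t in PG(2,q) if and only if there exists an arc B in PG(2,q) of cardinality (m − t)·q + m such that m − t ≤ B(L) ≤ m for every line L of PG(2,q). -/
open Module

/-- The set of subspaces of the vector space `F^3` of (algebraic) dimension `k`;
for `k = 1` these are the points of `PG(2, q)` and for `k = 2` the lines. -/
abbrev PSub (F : Type*) [Field F] (v k : ℕ) :=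
  {S : Submodule F (Fin v → F) // Module.finrank F S = k}

/-- The multiplicity `K(S)` of a subspace `S` with respect to the arc `K`. -/
noncomputable def pmult {F : Type*} [Field F] {v : ℕ}
    (K : PSub F v 1 → ℕ) (S : Submodule F (Fin v → F)) : ℕ :=
  ∑ᶠ (P : PSub F v 1) (_ : P.1 ≤ S), K P

/-- The cardinality `#K` of the arc `K`. -/
noncomputable def pcard {F : Type*} [Field F] {v : ℕ} (K : PSub F v 1 → ℕ) : ℕ :=
  ∑ᶠ P : PSub F v 1, K P

/-! The polarity `W ↦ W^⊥` of `F^3` exchanges points and lines and reverses incidence. Double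
counting gives `∑_L K(L) = (q+1)·#K` and `∑_{L ∋ P} K(L) = q·K(P) + #K` for every arc `K`.
If `K` is a strong `(t mod q)`-arc, write `K(L) = q·a(L) + t`; transported to points by the
polarity, `a` becomes an arc `B`, and the second identity gives `B(P^⊥) = K(P) + (m - t)`,
so every line has `B`-multiplicity between `m - t` and `m`. Conversely `K(P) := B(P^⊥) - (m - t)`
satisfies `K(L) = q·B(L^⊥) + t` by the same identity applied to `B`. -/

open Finset
open scoped Classical

noncomputable def polarity {F : Type*} [Field F] {v : ℕ} :
    Submodule F (Fin v → F) ≃o (Submodule F (Fin v → F))ᵒᵈ :=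
  Subspace.orderIsoFiniteDimensional.trans
    (Submodule.orderIsoMapComap (Pi.basisFun F (Fin v)).toDualEquiv.symm).dual

lemma polarity_apply {F : Type*} [Field F] {v : ℕ} (W : Submodule F (Fin v → F)) :
    (OrderDual.ofDual (polarity W) : Submodule F (Fin v → F)) =
      W.dualAnnihilator.map
        ((Pi.basisFun F (Fin v)).toDualEquiv.symm : Dual F (Fin v → F) →ₗ[F] (Fin v → F)) :=
  rfl

lemma finrank_polarity_add_finrank {F : Type*} [Field F] {v : ℕ} (W : Submodule F (Fin v → F)) :
    finrank F (OrderDual.ofDual (polarity W) : Submodule F (Fin v → F)) + finrank F W = v := by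
  rw [polarity_apply, LinearEquiv.finrank_map_eq, add_comm,
    Subspace.finrank_add_finrank_dualAnnihilator_eq, finrank_fin_fun]

namespace PSub

variable {F : Type*} [Field F] {v : ℕ}

noncomputable def dual {k l : ℕ} (h : k + l = v) : PSub F v k ≃ PSub F v l where
  toFun S := ⟨OrderDual.ofDual (polarity S.1), by
    have := finrank_polarity_add_finrank S.1
    omega⟩
  invFun T := ⟨polarity.symm (OrderDual.toDual T.1), by
    have := finrank_polarity_add_finrank (polarity.symm (OrderDual.toDual T.1))
    rw [OrderIso.apply_symm_apply, OrderDual.ofDual_toDual] at this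
    omega⟩
  left_inv S := Subtype.ext (polarity.symm_apply_apply S.1)
  right_inv T :=
    Subtype.ext (congrArg OrderDual.ofDual (polarity.apply_symm_apply (OrderDual.toDual T.1)))

lemma dual_le_dual_iff {k l : ℕ} (h : k + l = v) (h' : l + k = v) (S : PSub F v k)
    (T : PSub F v l) : (dual h' T).1 ≤ (dual h S).1 ↔ S.1 ≤ T.1 :=
  polarity.le_iff_le (x := S.1) (y := T.1)

noncomputable instance [Finite F] (k : ℕ) : Fintype (PSub F v k) := Fintype.ofFinite _

variable [Fintype F]

lemma card_points_le (W : Submodule F (Fin v → F)) :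
    #{P : PSub F v 1 | P.1 ≤ W} = ∑ i ∈ range (finrank F W), Fintype.card F ^ i := by
  let e : Projectivization F W ≃ {P : PSub F v 1 // P.1 ≤ W} :=
    (Projectivization.equivSubmodule F W).trans <|
      (Equiv.subtypeEquiv (Submodule.MapSubtype.orderIso W).toEquiv fun H => by
        rw [← Submodule.finrank_map_subtype_eq W H]; rfl).trans <|
      (Equiv.subtypeSubtypeEquivSubtypeInter _ _).trans <|
      (Equiv.subtypeEquivRight fun _ => and_comm).trans
      (Equiv.subtypeSubtypeEquivSubtypeInter _ _).symm
  rw [← Fintype.card_subtype, ← Nat.card_eq_fintype_card, ← Nat.card_congr e,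
    Projectivization.card_of_finrank F W rfl, Nat.card_eq_fintype_card]

lemma card_points : Fintype.card (PSub F v 1) = ∑ i ∈ range v, Fintype.card F ^ i := by
  rw [← Nat.card_eq_fintype_card, ← Nat.card_congr (Projectivization.equivSubmodule F _),
    Projectivization.card_of_finrank F _ (finrank_fin_fun F), Nat.card_eq_fintype_card]

lemma card_points_le_line (L : PSub F v 2) :
    #{P : PSub F v 1 | P.1 ≤ L.1} = Fintype.card F + 1 := by
  simp [card_points_le, L.2, Finset.sum_range_succ, add_comm]

lemma card_lines_through_pair {P P' : PSub F v 1} (hP : P ≠ P') :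
    #{L : PSub F v 2 | P.1 ≤ L.1 ∧ P'.1 ≤ L.1} = 1 := by
  have hlt : P.1 < P.1 ⊔ P'.1 := left_lt_sup.2 fun hle =>
    hP (Subtype.ext (Submodule.eq_of_le_of_finrank_le hle (by rw [P.2, P'.2])).symm)
  have hjoin : finrank F ↥(P.1 ⊔ P'.1) = 2 := by
    have := Submodule.finrank_add_le_finrank_add_finrank P.1 P'.1
    have := Submodule.finrank_lt_finrank_of_lt hlt
    rw [P.2, P'.2] at *
    omega
  rw [card_eq_one]
  refine ⟨⟨_, hjoin⟩, ?_⟩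
  ext L
  simp only [mem_filter, mem_univ, true_and, mem_singleton, ← sup_le_iff]
  constructor
  · intro hL
    exact Subtype.ext (Submodule.eq_of_le_of_finrank_le hL (by rw [hjoin, L.2])).symm
  · rintro rfl
    exact le_rfl

end PSub

section Arcs

variable {F : Type*} [Field F]

noncomputable abbrev pointDual : PSub F 3 1 ≃ PSub F 3 2 := PSub.dual rfl

noncomputable abbrev lineDual : PSub F 3 2 ≃ PSub F 3 1 := PSub.dual rfl

lemma lineDual_le_pointDual_iff (P : PSub F 3 1) (L : PSub F 3 2) :
    (lineDual L).1 ≤ (pointDual P).1 ↔ P.1 ≤ L.1 :=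
  PSub.dual_le_dual_iff _ _ P L

variable [Fintype F]

lemma pmult_eq_sum {v : ℕ} (K : PSub F v 1 → ℕ) (S : Submodule F (Fin v → F)) :
    pmult K S = ∑ P with P.1 ≤ S, K P := by
  rw [pmult, finsum_eq_sum_of_fintype, sum_filter]
  exact sum_congr rfl fun P _ => finsum_eq_if

lemma pcard_eq_sum {v : ℕ} (K : PSub F v 1 → ℕ) : pcard K = ∑ P, K P :=
  finsum_eq_sum_of_fintype K

lemma sum_pmult_eq_sum_card_mul {v : ℕ} (K : PSub F v 1 → ℕ) (s : Finset (PSub F v 2)) :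
    ∑ L ∈ s, pmult K L.1 = ∑ P, #{L ∈ s | P.1 ≤ L.1} * K P := by
  simp_rw [pmult_eq_sum, sum_filter, card_filter, sum_mul, ite_mul, one_mul, zero_mul]
  exact sum_comm

lemma card_lines_through (P : PSub F 3 1) :
    #{L : PSub F 3 2 | P.1 ≤ L.1} = Fintype.card F + 1 := by
  rw [← PSub.card_points_le_line (pointDual P)]
  exact card_equiv lineDual (by simp [lineDual_le_pointDual_iff])

lemma card_lines : Fintype.card (PSub F 3 2) = Fintype.card F ^ 2 + Fintype.card F + 1 := by
  rw [← Fintype.card_congr lineDual.symm, PSub.card_points]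
  simp only [sum_range_succ, sum_range_zero]
  ring

lemma sum_pmult_lines (K : PSub F 3 1 → ℕ) :
    ∑ L : PSub F 3 2, pmult K L.1 = (Fintype.card F + 1) * pcard K := by
  simp [sum_pmult_eq_sum_card_mul, card_lines_through, pcard_eq_sum, mul_sum]

lemma sum_pmult_lines_through (K : PSub F 3 1 → ℕ) (P₀ : PSub F 3 1) :
    ∑ L : PSub F 3 2 with P₀.1 ≤ L.1, pmult K L.1 = Fintype.card F * K P₀ + pcard K := by
  have hcount : ∀ P, #{L ∈ {L : PSub F 3 2 | P₀.1 ≤ L.1} | P.1 ≤ L.1} * K P =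
      (if P = P₀ then Fintype.card F * K P else 0) + K P := by
    intro P
    rw [filter_filter]
    split_ifs with hP
    · simp [hP, card_lines_through, add_mul]
    · rw [PSub.card_lines_through_pair (Ne.symm hP), one_mul, zero_add]
  rw [sum_pmult_eq_sum_card_mul, sum_congr rfl fun P _ => hcount P, sum_add_distrib,
    sum_ite_eq', pcard_eq_sum]
  simp

lemma sum_lines_of_pmult_eq {K : PSub F 3 1 → ℕ} {f : PSub F 3 2 → ℕ} {c t : ℕ}
    (h : ∀ L, pmult K L.1 = c * f L + t) :
    c * ∑ L, f L + (Fintype.card F ^ 2 + Fintype.card F + 1) * t =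
      (Fintype.card F + 1) * pcard K := by
  rw [← sum_pmult_lines, sum_congr rfl fun L _ => h L, sum_add_distrib, mul_sum, sum_const,
    card_univ, card_lines, smul_eq_mul]

lemma sum_lines_through_of_pmult_eq {K : PSub F 3 1 → ℕ} {f : PSub F 3 2 → ℕ} {c t : ℕ}
    (h : ∀ L, pmult K L.1 = c * f L + t) (P : PSub F 3 1) :
    c * ∑ L with P.1 ≤ L.1, f L + (Fintype.card F + 1) * t =
      Fintype.card F * K P + pcard K := by
  rw [← sum_pmult_lines_through, sum_congr rfl fun L _ => h L, sum_add_distrib, mul_sum,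
    sum_const, card_lines_through, smul_eq_mul]

lemma pcard_comp_pointDual (f : PSub F 3 2 → ℕ) : pcard (f ∘ pointDual) = ∑ L, f L := by
  rw [pcard_eq_sum]
  exact Fintype.sum_equiv pointDual _ _ fun _ => rfl

lemma pmult_comp_pointDual (f : PSub F 3 2 → ℕ) (M : PSub F 3 2) :
    pmult (f ∘ pointDual) M.1 = ∑ L with (lineDual M).1 ≤ L.1, f L := by
  rw [pmult_eq_sum]
  exact sum_equiv pointDual (by simp [lineDual_le_pointDual_iff]) fun _ _ => rfl

theorem exists_bounded_arc_of_strong_arc {K : PSub F 3 1 → ℕ} {s t : ℕ}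
    (ht : t < Fintype.card F) (hmod : ∀ L : PSub F 3 2, pmult K L.1 ≡ t [MOD Fintype.card F])
    (hK : ∀ P, K P ≤ t) (hcard : pcard K = (s + t) * Fintype.card F + t) :
    ∃ B : PSub F 3 1 → ℕ, pcard B = s * Fintype.card F + (s + t) ∧
      ∀ L : PSub F 3 2, s ≤ pmult B L.1 ∧ pmult B L.1 ≤ s + t := by
  have hq_pos : 0 < Fintype.card F := Fintype.card_pos
  have hline : ∀ L : PSub F 3 2,
      pmult K L.1 = Fintype.card F * (pmult K L.1 / Fintype.card F) + t := fun L => by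
    rw [← Nat.mod_eq_of_lt ht, ← hmod L, Nat.div_add_mod]
  refine ⟨(fun L => pmult K L.1 / Fintype.card F) ∘ pointDual, ?_, fun M => ?_⟩
  · have := sum_lines_of_pmult_eq hline
    rw [hcard] at this
    rw [pcard_comp_pointDual]
    refine Nat.eq_of_mul_eq_mul_left hq_pos ?_
    linarith
  · have := sum_lines_through_of_pmult_eq hline (lineDual M)
    rw [hcard] at this
    have hB : pmult ((fun L => pmult K L.1 / Fintype.card F) ∘ pointDual) M.1 =
        K (lineDual M) + s := by
      rw [pmult_comp_pointDual]
      refine Nat.eq_of_mul_eq_mul_left hq_pos ?_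
      linarith
    have := hK (lineDual M)
    omega

theorem exists_strong_arc_of_bounded_arc {B : PSub F 3 1 → ℕ} {s t : ℕ}
    (hB : ∀ L : PSub F 3 2, s ≤ pmult B L.1 ∧ pmult B L.1 ≤ s + t)
    (hcard : pcard B = s * Fintype.card F + (s + t)) :
    ∃ K : PSub F 3 1 → ℕ, (∀ L : PSub F 3 2, pmult K L.1 ≡ t [MOD Fintype.card F]) ∧
      (∀ P, K P ≤ t) ∧ pcard K = (s + t) * Fintype.card F + t := by
  have hline : ∀ L : PSub F 3 2, pmult B L.1 = 1 * (pmult B L.1 - s) + s := fun L => by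
    have := (hB L).1
    omega
  refine ⟨(fun L => pmult B L.1 - s) ∘ pointDual, fun L => ?_, fun P => ?_, ?_⟩
  · have := sum_lines_through_of_pmult_eq hline (lineDual L)
    rw [hcard] at this
    have hK : pmult ((fun L => pmult B L.1 - s) ∘ pointDual) L.1 =
        Fintype.card F * B (lineDual L) + t := by
      rw [pmult_comp_pointDual]
      linarith
    rw [hK, Nat.ModEq, Nat.mul_add_mod]
  · have := hB (pointDual P)
    simp only [Function.comp_apply]
    omega
  · have := sum_lines_of_pmult_eq hline
    rw [hcard] at this
    rw [pcard_comp_pointDual]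
    linarith

end Arcs

theorem stmt4_general {F : Type*} [Field F] [Fintype F] (q : ℕ) (hq : Fintype.card F = q)
    (t m : ℕ) (ht2 : t ≤ q - 1) (hm : t ≤ m) :
    (∃ K : PSub F 3 1 → ℕ,
      (∀ L : PSub F 3 2, pmult K L.1 ≡ t [MOD q]) ∧
      (∀ P : PSub F 3 1, K P ≤ t) ∧
      pcard K = m * q + t) ↔
    (∃ B : PSub F 3 1 → ℕ,
      pcard B = (m - t) * q + m ∧
      ∀ L : PSub F 3 2, m - t ≤ pmult B L.1 ∧ pmult B L.1 ≤ m) := by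
  subst hq
  obtain ⟨s, rfl⟩ : ∃ s, m = s + t := ⟨m - t, by omega⟩
  have ht : t < Fintype.card F := by
    have : 1 < Fintype.card F := Fintype.one_lt_card
    omega
  rw [Nat.add_sub_cancel]
  exact ⟨fun ⟨_, hmod, hK, hcard⟩ => exists_bounded_arc_of_strong_arc ht hmod hK hcard,
    fun ⟨_, hcard, hB⟩ => exists_strong_arc_of_bounded_arc hB hcard⟩

/-- A strong `(t mod q)`-arc of cardinality `m*q + t` exists in `PG(2,q)` if
and only if there exists an arc `B` in `PG(2,q)` of cardinality
`(m - t)*q + m` whose line multiplicities all lie in `{m-t, ..., m}`. -/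
theorem stmt4 {F : Type*} [Field F] [Fintype F] (q : ℕ) (hq : Fintype.card F = q)
    (t m : ℕ) (ht1 : 1 ≤ t) (ht2 : t ≤ q - 1) (hm : t ≤ m) :
    (∃ K : PSub F 3 1 → ℕ,
      (∀ L : PSub F 3 2, pmult K L.1 ≡ t [MOD q]) ∧
      (∀ P : PSub F 3 1, K P ≤ t) ∧
      pcard K = m * q + t) ↔
    (∃ B : PSub F 3 1 → ℕ,
      pcard B = (m - t) * q + m ∧
      ∀ L : PSub F 3 2, m - t ≤ pmult B L.1 ∧ pmult B L.1 ≤ m) :=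
  stmt4_general q hq t m ht2 hm
end

section
/- Let q be a prime power, v ≥ 3, 1 ≤ t < q, and let K be an (n,s)-arc in PG(v−1,q) that is t-quasi-divisible with divisor q. Suppose there exist c points P_1, …, P_c (not necessarily distinct) such that for every hyperplane H, the residue of n + t − K(H) modulo q (taken in {0,…,q−1}) is at least #{i ∈ {1,…,c} : P_i lies in H}. Then K is c-extendable, i.e. there exists an (n+c, s)-arc K' with K'(P) ≥ K(P) for every point P. In particular, if there exists a point P such that K(H) ≢ n + t (mod q) for every hyperplane H containing P, then K is 1-extendable. -/
open Module

/-- The residue of `n + t - K(H)` modulo `q`, taken in `{0, ..., q-1}`;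
this is the multiplicity of the point of the dual geometry corresponding to
the hyperplane `H` with respect to the dual arc `K̃`. -/
noncomputable def dualMult {F : Type*} [Field F] {v : ℕ} (q n t : ℕ)
    (K : PSub F v 1 → ℕ) (H : PSub F v (v - 1)) : ℕ :=
  ((((n : ℤ) + (t : ℤ) - (pmult K H.1 : ℤ)) % (q : ℤ)).toNat)

/-!
Add the points `P_i` to `K`, i.e. take `K' = K + ∑ᵢ χ_{P_i}`. Since `K(H) ≡ n + j` with
`0 ≤ j ≤ t` and `s ≡ n + t (mod q)`, the dual multiplicity `K̃(H) = t - j` satisfies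
`K(H) + K̃(H) ≤ s`, and `K̃(H) = 0` whenever `K(H) = s`. Hence
`K'(H) ≤ K(H) + K̃(H) ≤ s` for every hyperplane, and a hyperplane with `K(H) = s` keeps
`K'(H) = s`. For the special case take `c = 1`: a hyperplane through `P` has `j < t`,
so `K̃(H) ≥ 1`.
-/

open Finset

/-- The arc `∑ᵢ χ_{f i}` of the points `f i`, counted with multiplicity. -/
noncomputable def fiberCard {ι α : Type*} (f : ι → α) (a : α) : ℕ := Nat.card {i // f i = a}

theorem finsum_mem_fiberCard {ι α : Type*} [Finite ι] (f : ι → α) (p : α → Prop) :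
    ∑ᶠ (a) (_ : p a), fiberCard f a = Nat.card {i // p (f i)} := by
  classical
  have := Fintype.ofFinite ι
  have hcard (r : α → Prop) : Nat.card {i // r (f i)} = #{i | r (f i)} := by
    rw [Nat.card_eq_fintype_card, Fintype.card_subtype]
  set t := (univ.image f).filter p
  have hpt : #{i | p (f i)} = #{i | f i ∈ t} := by
    congr 1; ext i; simp [t]
  rw [finsum_cond_eq_sum_of_cond_iff _ (t := t), hcard, hpt,
    ← sum_card_fiberwise_eq_card_filter]
  · exact sum_congr rfl fun a _ => hcard (· = a)
  · intro a ha
    obtain ⟨i, rfl⟩ : ∃ i, f i = a := by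
      by_contra! h
      exact ha (Nat.card_eq_zero.2 (Or.inl ⟨fun i => h i i.2⟩))
    simp [t]

section Arcs

variable {F : Type*} [Field F] {v : ℕ}

theorem pcard_eq_pmult_top (K : PSub F v 1 → ℕ) : pcard K = pmult K ⊤ := by
  simp [pmult, pcard]

theorem pmult_add [Finite F] (K L : PSub F v 1 → ℕ) (S : Submodule F (Fin v → F)) :
    pmult (K + L) S = pmult K S + pmult L S :=
  finsum_mem_add_distrib (Set.toFinite {P : PSub F v 1 | P.1 ≤ S})

theorem pmult_fiberCard {ι : Type*} [Finite ι] (Ps : ι → PSub F v 1)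
    (S : Submodule F (Fin v → F)) : pmult (fiberCard Ps) S = Nat.card {i // (Ps i).1 ≤ S} :=
  finsum_mem_fiberCard Ps _

def IsQuasiDivisible (q n t : ℕ) (K : PSub F v 1 → ℕ) : Prop :=
  ∀ H : PSub F v (v - 1), ∃ j : ℕ, j ≤ t ∧ pmult K H.1 ≡ n + j [MOD q]

variable {q n s t : ℕ} {K : PSub F v 1 → ℕ}

theorem dualMult_eq_sub_of_modEq (ht : t < q) {H : PSub F v (v - 1)} {j : ℕ} (hj : j ≤ t)
    (hK : pmult K H.1 ≡ n + j [MOD q]) : dualMult q n t K H = t - j := by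
  have hK' : (pmult K H.1 : ℤ) ≡ n + j [ZMOD q] := by exact_mod_cast Int.natCast_modEq_iff.2 hK
  have hres : (n + t - pmult K H.1 : ℤ) ≡ t - j [ZMOD q] := by
    simpa using (Int.ModEq.refl ((n : ℤ) + t)).sub hK'
  unfold dualMult
  rw [hres.eq, Int.emod_eq_of_lt (by omega) (by omega)]
  omega

theorem dualMult_eq_zero_of_modEq (ht : t < q) {H : PSub F v (v - 1)}
    (hK : pmult K H.1 ≡ n + t [MOD q]) : dualMult q n t K H = 0 := by
  simpa using dualMult_eq_sub_of_modEq ht le_rfl hK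

theorem one_le_dualMult (ht : t < q) (hqd : IsQuasiDivisible q n t K) {H : PSub F v (v - 1)}
    (hK : ¬ pmult K H.1 ≡ n + t [MOD q]) : 1 ≤ dualMult q n t K H := by
  obtain ⟨j, hj, hKj⟩ := hqd H
  have hjt : j ≠ t := by rintro rfl; exact hK hKj
  rw [dualMult_eq_sub_of_modEq ht hj hKj]
  omega

/-- From `K(H) ≡ n + j` and `s ≡ n + t` we get `s - K(H) ≡ t - j (mod q)`,
and `t - j < q` is the least nonnegative residue of that class. -/
theorem pmult_add_dualMult_le (ht : t < q) (hs : ∀ H : PSub F v (v - 1), pmult K H.1 ≤ s)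
    (hst : s ≡ n + t [MOD q]) (hqd : IsQuasiDivisible q n t K) (H : PSub F v (v - 1)) :
    pmult K H.1 + dualMult q n t K H ≤ s := by
  obtain ⟨j, hj, hKj⟩ := hqd H
  rw [dualMult_eq_sub_of_modEq ht hj hKj]
  set m := pmult K H.1
  have hms : m ≤ s := hs H
  have hcongr : m + (t - j) ≡ m + (s - m) [MOD q] := by
    rw [Nat.add_sub_cancel' hms]
    calc m + (t - j) ≡ n + j + (t - j) [MOD q] := hKj.add_right _
      _ = n + t := by omega
      _ ≡ s [MOD q] := hst.symm
  have hres : (t - j) % q = (s - m) % q := Nat.ModEq.add_left_cancel' m hcongr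
  calc m + (t - j) = m + (s - m) % q := by rw [← hres, Nat.mod_eq_of_lt (by omega)]
    _ ≤ m + (s - m) := Nat.add_le_add_left (Nat.mod_le _ _) m
    _ = s := Nat.add_sub_cancel' hms

theorem exists_extension [Finite F] (ht : t < q) (hn : pcard K = n)
    (hs : ∀ H : PSub F v (v - 1), pmult K H.1 ≤ s)
    (hs' : ∃ H : PSub F v (v - 1), pmult K H.1 = s) (hst : s ≡ n + t [MOD q])
    (hqd : IsQuasiDivisible q n t K) {ι : Type*} [Finite ι] (Ps : ι → PSub F v 1)
    (hPs : ∀ H : PSub F v (v - 1), Nat.card {i // (Ps i).1 ≤ H.1} ≤ dualMult q n t K H) :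
    ∃ K' : PSub F v 1 → ℕ,
      pcard K' = n + Nat.card ι ∧
      (∀ H : PSub F v (v - 1), pmult K' H.1 ≤ s) ∧
      (∃ H : PSub F v (v - 1), pmult K' H.1 = s) ∧
      (∀ P : PSub F v 1, K P ≤ K' P) := by
  refine ⟨K + fiberCard Ps, ?_, fun H => ?_, ?_, fun P => Nat.le_add_right _ _⟩
  · rw [pcard_eq_pmult_top, pmult_add, pmult_fiberCard, ← pcard_eq_pmult_top, hn]
    simp
  · rw [pmult_add, pmult_fiberCard]
    exact (Nat.add_le_add_left (hPs H) _).trans (pmult_add_dualMult_le ht hs hst hqd H)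
  · obtain ⟨H, hH⟩ := hs'
    have hPsH := hPs H
    rw [dualMult_eq_zero_of_modEq ht (hH ▸ hst)] at hPsH
    refine ⟨H, ?_⟩
    rw [pmult_add, pmult_fiberCard, hH]
    omega

end Arcs

theorem stmt11_general {F : Type*} [Field F] [Fintype F] (q : ℕ)
    {v : ℕ} (n s t : ℕ) (ht2 : t < q)
    (K : PSub F v 1 → ℕ) (hn : pcard K = n)
    (hs : ∀ H : PSub F v (v - 1), pmult K H.1 ≤ s)
    (hs' : ∃ H : PSub F v (v - 1), pmult K H.1 = s)
    (hst : s ≡ n + t [MOD q])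
    (hqd : ∀ H : PSub F v (v - 1), ∃ j : ℕ, j ≤ t ∧ pmult K H.1 ≡ n + j [MOD q]) :
    (∀ c : ℕ, ∀ Ps : Fin c → PSub F v 1,
      (∀ H : PSub F v (v - 1),
        Nat.card {i : Fin c // (Ps i).1 ≤ H.1} ≤ dualMult q n t K H) →
      ∃ K' : PSub F v 1 → ℕ,
        pcard K' = n + c ∧
        (∀ H : PSub F v (v - 1), pmult K' H.1 ≤ s) ∧
        (∃ H : PSub F v (v - 1), pmult K' H.1 = s) ∧
        (∀ P : PSub F v 1, K P ≤ K' P)) ∧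
    ((∃ P : PSub F v 1, ∀ H : PSub F v (v - 1),
        P.1 ≤ H.1 → ¬ (pmult K H.1 ≡ n + t [MOD q])) →
      ∃ K' : PSub F v 1 → ℕ,
        pcard K' = n + 1 ∧
        (∀ H : PSub F v (v - 1), pmult K' H.1 ≤ s) ∧
        (∃ H : PSub F v (v - 1), pmult K' H.1 = s) ∧
        (∀ P : PSub F v 1, K P ≤ K' P)) := by
  refine ⟨fun c Ps hPs => by simpa using exists_extension ht2 hn hs hs' hst hqd Ps hPs, ?_⟩
  rintro ⟨P, hP⟩
  suffices hP1 : ∀ H : PSub F v (v - 1),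
      Nat.card {_i : Fin 1 // P.1 ≤ H.1} ≤ dualMult q n t K H by
    simpa using exists_extension ht2 hn hs hs' hst hqd (fun _ : Fin 1 => P) hP1
  intro H
  by_cases hPH : P.1 ≤ H.1
  · calc Nat.card {_i : Fin 1 // P.1 ≤ H.1} ≤ Nat.card (Fin 1) := Finite.card_subtype_le _
      _ = 1 := Nat.card_eq_fintype_card.trans (Fintype.card_fin 1)
      _ ≤ dualMult q n t K H := one_le_dualMult ht2 hqd (hP H hPH)
  · simp [hPH]

/-- Extendability of `t`-quasi-divisible `(n,s)`-arcs: if there are `c` points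
`P_1, ..., P_c` such that for every hyperplane `H` the dual multiplicity
`(n + t - K(H)) mod q` is at least the number of indices `i` with `P_i ∈ H`,
then `K` is `c`-extendable.  In particular, if some point lies only on
hyperplanes `H` with `K(H) ≢ n + t (mod q)`, then `K` is extendable. -/
theorem stmt11 {F : Type*} [Field F] [Fintype F] (q : ℕ) (hq : Fintype.card F = q)
    {v : ℕ} (hv : 3 ≤ v) (n s t : ℕ) (ht1 : 1 ≤ t) (ht2 : t < q)
    (K : PSub F v 1 → ℕ) (hn : pcard K = n)
    (hs : ∀ H : PSub F v (v - 1), pmult K H.1 ≤ s)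
    (hs' : ∃ H : PSub F v (v - 1), pmult K H.1 = s)
    (hst : s ≡ n + t [MOD q])
    (hqd : ∀ H : PSub F v (v - 1), ∃ j : ℕ, j ≤ t ∧ pmult K H.1 ≡ n + j [MOD q]) :
    (∀ c : ℕ, ∀ Ps : Fin c → PSub F v 1,
      (∀ H : PSub F v (v - 1),
        Nat.card {i : Fin c // (Ps i).1 ≤ H.1} ≤ dualMult q n t K H) →
      ∃ K' : PSub F v 1 → ℕ,
        pcard K' = n + c ∧
        (∀ H : PSub F v (v - 1), pmult K' H.1 ≤ s) ∧
        (∃ H : PSub F v (v - 1), pmult K' H.1 = s) ∧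
        (∀ P : PSub F v 1, K P ≤ K' P)) ∧
    ((∃ P : PSub F v 1, ∀ H : PSub F v (v - 1),
        P.1 ≤ H.1 → ¬ (pmult K H.1 ≡ n + t [MOD q])) →
      ∃ K' : PSub F v 1 → ℕ,
        pcard K' = n + 1 ∧
        (∀ H : PSub F v (v - 1), pmult K' H.1 ≤ s) ∧
        (∃ H : PSub F v (v - 1), pmult K' H.1 = s) ∧
        (∀ P : PSub F v 1, K P ≤ K' P)) :=
  stmt11_general q n s t ht2 K hn hs hs' hst hqd
end
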